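/- For the generalized repetition code of length L with Δ ≥ 2 branches, and any f0 ∈ F2^{Y(0)} with |f0| ≤ |Y(0)|/2: let s, t, u be the numbers of branches on which δ0 f0 has respectively no violated interior check, an odd number of violated interior checks, and a positive even number of violated interior checks. If the root bit of f0 is 0, then the number of boundary leaves where f0 is nonzero equals t; if the root bit is 1, then this number equals s + u and moreover s ≤ t + u. In both cases the number of nonzero boundary leaves is at most |δ0 f0|_int. -/
import Mathlib


/-- Vertex set of the generalized repetition code with `Δ` branches, each branch a
path of `n+1` vertices attached to a common root (`none`); length `L = 2*n+3` (odd). -/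
abbrev RepV (Δ n : ℕ) := Option (Fin Δ × Fin (n + 1))

/-- The neighbour of the bit `(b,j)` that is closer to the root. -/
def repPrev {Δ n : ℕ} (e : Fin Δ × Fin (n + 1)) : RepV Δ n :=
  if h : (e.2 : ℕ) = 0 then none else some (e.1, ⟨(e.2 : ℕ) - 1, by omega⟩)

/-- `|δ0 f|_int`: the total number of violated interior checks of `f`. -/
def repInt {Δ n : ℕ} (f : RepV Δ n → ZMod 2) : ℕ :=
  (Finset.univ.filter (fun e : Fin Δ × Fin (n + 1) => f (some e) ≠ f (repPrev e))).card

/-- Number of violated interior checks of `f` on the branch `b`. -/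
def branchInt {Δ n : ℕ} (f : RepV Δ n → ZMod 2) (b : Fin Δ) : ℕ :=
  (Finset.univ.filter (fun j : Fin (n + 1) => f (some (b, j)) ≠ f (repPrev (b, j)))).card

/-- `|δ0 f|_∂`: the number of boundary leaves at which `f` is nonzero. -/
def repBd {Δ n : ℕ} (f : RepV Δ n → ZMod 2) : ℕ :=
  (Finset.univ.filter (fun b : Fin Δ => f (some (b, Fin.last n)) ≠ 0)).card

-- auxiliary chain function
def gchain {Δ n : ℕ} (f : RepV Δ n → ZMod 2) (b : Fin Δ) : ℕ → ZMod 2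
  | 0 => f none
  | j+1 => f (some (b, ⟨min j n, by omega⟩))

lemma gchain_prev {Δ n : ℕ} (f : RepV Δ n → ZMod 2) (b : Fin Δ) (j : Fin (n+1)) :
    f (repPrev (b, j)) = gchain f b j := by
  rcases j with ⟨j, hj⟩
  cases j with
  | zero => simp [repPrev, gchain]
  | succ k =>
    simp only [repPrev]
    rw [dif_neg (by simp)]
    simp [gchain, Nat.min_eq_left (by omega : k ≤ n)]

lemma gchain_cur {Δ n : ℕ} (f : RepV Δ n → ZMod 2) (b : Fin Δ) (j : Fin (n+1)) :
    f (some (b, j)) = gchain f b (j + 1) := by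
  rcases j with ⟨j, hj⟩
  simp [gchain, Nat.min_eq_left (by omega : j ≤ n)]

lemma leaf_eq {Δ n : ℕ} (f : RepV Δ n → ZMod 2) (b : Fin Δ) :
    f (some (b, Fin.last n)) = f none + (branchInt f b : ℕ) := by
  have key : ((branchInt f b : ℕ) : ZMod 2)
      = ∑ j ∈ Finset.range (n+1), (gchain f b (j+1) - gchain f b j) := by
    rw [branchInt, Finset.card_filter, Nat.cast_sum,
      ← Fin.sum_univ_eq_sum_range (fun j => gchain f b (j+1) - gchain f b j)]
    refine Finset.sum_congr rfl fun j _ => ?_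
    rw [gchain_prev f b j, gchain_cur f b j]
    have : ∀ a c : ZMod 2, ((if a ≠ c then 1 else 0 : ℕ) : ZMod 2) = a - c := by decide
    exact this _ _
  rw [key, Finset.sum_range_sub]
  have h1 : gchain f b (n+1) = f (some (b, Fin.last n)) := by
    simp [gchain, Fin.last]
  have h0 : gchain f b 0 = f none := rfl
  rw [h1, h0]
  ring

lemma repInt_eq_sum {Δ n : ℕ} (f : RepV Δ n → ZMod 2) :
    repInt f = ∑ b : Fin Δ, branchInt f b := by
  rw [repInt, Finset.card_filter, Fintype.sum_prod_type]
  refine Finset.sum_congr rfl fun b _ => ?_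
  rw [branchInt, Finset.card_filter]

lemma branch_const {Δ n : ℕ} (f : RepV Δ n → ZMod 2) (b : Fin Δ)
    (h : branchInt f b = 0) (j : Fin (n+1)) : f (some (b, j)) = f none := by
  have hz : ∀ k : Fin (n+1), f (some (b, k)) = f (repPrev (b, k)) := by
    intro k
    by_contra hk
    have := Finset.card_eq_zero.mp h
    have : k ∈ (Finset.univ.filter (fun j : Fin (n + 1) => f (some (b, j)) ≠ f (repPrev (b, j)))) := by
      simp [hk]
    rw [Finset.card_eq_zero.mp h] at this
    exact absurd this (Finset.notMem_empty k)
  rcases j with ⟨j, hj⟩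
  induction j with
  | zero => rw [hz ⟨0, hj⟩]; simp [repPrev]
  | succ k ih =>
    rw [hz ⟨k+1, hj⟩]
    have : f (repPrev (b, (⟨k+1, hj⟩ : Fin (n+1)))) = f (some (b, ⟨k, by omega⟩)) := by
      simp [repPrev]
    rw [this, ih (by omega)]

lemma wt_lb {Δ n : ℕ} (f0 : RepV Δ n → ZMod 2) (hroot : f0 none = 1) :
    1 + (Finset.univ.filter (fun b : Fin Δ => branchInt f0 b = 0)).card * (n+1)
      ≤ hammingNorm f0 := by
  classical
  set S0 := (Finset.univ.filter (fun b : Fin Δ => branchInt f0 b = 0)) ×ˢ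
      (Finset.univ : Finset (Fin (n+1))) with hS0
  set T : Finset (RepV Δ n) := insert none (S0.image Option.some) with hT
  have hsub : T ⊆ Finset.univ.filter (fun v => f0 v ≠ 0) := by
    intro v hv
    simp only [hT, Finset.mem_insert, Finset.mem_image] at hv
    rcases hv with rfl | ⟨⟨b, j⟩, hbj, rfl⟩
    · simp [hroot]
    · simp only [hS0, Finset.mem_product, Finset.mem_filter] at hbj
      have := branch_const f0 b hbj.1.2 j
      simp [this, hroot]
  have hcard : T.card = 1 + S0.card * 1 := by
    rw [hT, Finset.card_insert_of_notMem (by simp), Finset.card_image_of_injective _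
      (Option.some_injective _)]
    ring
  have := Finset.card_le_card hsub
  rw [hcard] at this
  rw [hS0, Finset.card_product] at this
  simpa [hammingNorm] using this

/-- For the generalized repetition code with Δ ≥ 2 branches and any f0
with |f0| ≤ |Y(0)|/2, letting s, t, u count the branches with zero / odd / positive
even numbers of violated interior checks: if the root bit is 0 then |δ0 f0|_∂ = t;
if the root bit is 1 then |δ0 f0|_∂ = s + u and s ≤ t + u.  In both cases
|δ0 f0|_∂ ≤ |δ0 f0|_int. -/
theorem stmt_11 (Δ n : ℕ) (hΔ : 2 ≤ Δ)
    (f0 : RepV Δ n → ZMod 2)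
    (hwt : 2 * hammingNorm f0 ≤ Fintype.card (RepV Δ n))
    (s t u : ℕ)
    (hs : s = (Finset.univ.filter (fun b : Fin Δ => branchInt f0 b = 0)).card)
    (ht : t = (Finset.univ.filter (fun b : Fin Δ => Odd (branchInt f0 b))).card)
    (hu : u = (Finset.univ.filter
      (fun b : Fin Δ => Even (branchInt f0 b) ∧ 0 < branchInt f0 b)).card) :
    (f0 none = 0 → repBd f0 = t) ∧
    (f0 none = 1 → repBd f0 = s + u ∧ s ≤ t + u) ∧
    repBd f0 ≤ repInt f0 := by
  classical
  -- parity facts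
  have hcast : ∀ m : ℕ, ((m : ZMod 2) = 0 ↔ Even m) := by
    intro m
    rw [ZMod.natCast_eq_zero_iff, Nat.even_iff, Nat.dvd_iff_mod_eq_zero]
  have hbd0 : f0 none = 0 → repBd f0 = t := by
    intro h0
    rw [ht, repBd]
    congr 1
    apply Finset.filter_congr
    intro b _
    rw [leaf_eq f0 b, h0, zero_add]
    simp only [ne_eq, hcast, Nat.not_even_iff_odd]
  have hbd1 : f0 none = 1 → repBd f0 = s + u := by
    intro h1
    have : repBd f0 = (Finset.univ.filter (fun b : Fin Δ => Even (branchInt f0 b))).card := by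
      rw [repBd]
      congr 1
      apply Finset.filter_congr
      intro b _
      rw [leaf_eq f0 b, h1]
      constructor
      · intro h
        by_contra he
        have : (branchInt f0 b : ZMod 2) = 1 := by
          have := (hcast (branchInt f0 b))
          rcases (by decide : ∀ x : ZMod 2, x = 0 ∨ x = 1) (branchInt f0 b) with h' | h'
          · exact absurd (this.mp h') he
          · exact h'
        rw [this] at h
        exact h (by decide)
      · intro he h
        rw [(hcast _).mpr he] at h
        simp at h
    rw [this, hs, hu]
    rw [← Finset.card_union_of_disjoint]
    · congr 1
      rw [← Finset.filter_or]
      apply Finset.filter_congr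
      intro b _
      constructor
      · intro h
        rcases Nat.eq_zero_or_pos (branchInt f0 b) with h' | h'
        · exact Or.inl h'
        · exact Or.inr ⟨h, h'⟩
      · rintro (h | h)
        · simp [h]
        · exact h.1
    · rw [Finset.disjoint_filter]
      intro b _ h
      simp [h]
  -- s + t + u = Δ
  have hstu : s + t + u = Δ := by
    rw [hs, ht, hu, Finset.card_filter, Finset.card_filter, Finset.card_filter,
      ← Finset.sum_add_distrib, ← Finset.sum_add_distrib]
    have : ∀ b : Fin Δ, ((if branchInt f0 b = 0 then 1 else 0)
        + (if Odd (branchInt f0 b) then 1 else 0)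
        + (if Even (branchInt f0 b) ∧ 0 < branchInt f0 b then 1 else 0)) = 1 := by
      intro b
      rcases Nat.even_or_odd (branchInt f0 b) with he | ho
      · rcases Nat.eq_zero_or_pos (branchInt f0 b) with h0 | h0
        · rw [if_pos h0, if_neg (by simp [h0, Nat.odd_iff]), if_neg (by omega)]
        · rw [if_neg (by omega), if_neg (Nat.not_odd_iff_even.mpr he),
            if_pos ⟨he, h0⟩]
      · rw [if_neg (by intro h0; rw [h0] at ho; simp [Nat.odd_iff] at ho), if_pos ho,
          if_neg (fun hc => (Nat.not_even_iff_odd.mpr ho) hc.1)]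
    rw [Finset.sum_congr rfl (fun b _ => this b)]
    simp
  -- repInt ≥ t + 2u
  have hint : t + 2 * u ≤ repInt f0 := by
    rw [repInt_eq_sum, ht, hu, Finset.card_filter, Finset.card_filter,
      Finset.mul_sum, ← Finset.sum_add_distrib]
    apply Finset.sum_le_sum
    intro b _
    rcases Nat.even_or_odd (branchInt f0 b) with he | ho
    · rcases Nat.eq_zero_or_pos (branchInt f0 b) with h0 | h0
      · simp [h0, Nat.odd_iff]
      · rw [if_neg (Nat.not_odd_iff_even.mpr he), if_pos ⟨he, h0⟩]
        rcases he with ⟨k, hk⟩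
        omega
    · rw [if_pos ho, if_neg (fun hc => (Nat.not_even_iff_odd.mpr ho) hc.1)]
      rcases ho with ⟨k, hk⟩
      omega
  -- s ≤ t + u when root = 1
  have hsle : f0 none = 1 → s ≤ t + u := by
    intro h1
    have hlb := wt_lb f0 h1
    rw [← hs] at hlb
    have hcard : Fintype.card (RepV Δ n) = Δ * (n+1) + 1 := by
      simp [RepV, Fintype.card_option, Fintype.card_prod]
    rw [hcard] at hwt
    have h2 : 2 * (1 + s * (n+1)) ≤ Δ * (n+1) + 1 := le_trans (by omega) hwt
    have h3 : 2 * s < Δ := by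
      by_contra hc
      push_neg at hc
      have : Δ * (n+1) ≤ 2 * s * (n+1) := Nat.mul_le_mul_right _ hc
      nlinarith
    omega
  refine ⟨hbd0, fun h1 => ⟨hbd1 h1, hsle h1⟩, ?_⟩
  rcases (by decide : ∀ x : ZMod 2, x = 0 ∨ x = 1) (f0 none) with h | h
  · rw [hbd0 h]; omega
  · rw [hbd1 h]; have := hsle h; omega
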